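/- arXiv:math/0403414 — 2 statements merged into one kernel-verified Lean document; each statement's English description precedes it below -/
import Mathlib

section
/- Let X be a finite connected multigraph with minimum degree 2 that is not a cycle. Then the transition matrix Q_E of the non-backtracking random walk on the set E of oriented edges is irreducible: for any two oriented edges e, f there exists n ≥ 0 with q_E^(n)(e,f) > 0. -/
open scoped BigOperators
open Filter

/-- A multigraph given by its set of *oriented* edges. Each oriented edge `e`
has an initial vertex `tail e = e⁻`, a terminal vertex `head e = e⁺`, and a
reversal `bar e = ě` with `ě ≠ e` (loops are counted twice). Local finiteness
is built in. -/
structure Multigraph where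
  V : Type
  E : Type
  tail : E → V
  head : E → V
  bar : E → E
  bar_bar : ∀ e, bar (bar e) = e
  bar_ne : ∀ e, bar e ≠ e
  head_bar : ∀ e, head (bar e) = tail e
  locFin : ∀ x, {e | tail e = x}.Finite

namespace Multigraph
variable (G : Multigraph)

/-- The degree of a vertex: the number of oriented edges emanating from it. -/
noncomputable def deg (x : G.V) : ℕ := (G.locFin x).toFinset.card

/-- `e → f`: `f` may follow `e` in a non-backtracking walk. -/
def Step (e f : G.E) : Prop := G.tail f = G.head e ∧ f ≠ G.bar e

/-- `e ⇒ f`: there is a non-backtracking walk from `e` to `f`. -/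
def Reach : G.E → G.E → Prop := Relation.ReflTransGen G.Step

/-- One-step transition probabilities of the edge non-backtracking random walk. -/
noncomputable def q (e f : G.E) : ℝ :=
  open Classical in
  if G.Step e f then 1 / ((G.deg (G.head e) : ℝ) - 1) else 0

/-- `n`-step transition probabilities `q_E^(n)` of the edge NBRW. -/
noncomputable def qn (G : Multigraph) : ℕ → G.E → G.E → ℝ
  | 0, e, f => open Classical in if e = f then 1 else 0
  | n + 1, e, f => ∑' g : G.E, qn G n e g * G.q g f

/-- Vertex NBRW transition probabilities:
`q^(n)(x,y) = (1/deg x) ∑_{e⁺=x, f⁺=y} q_E^(n)(e,f)`. -/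
noncomputable def qv (n : ℕ) (x y : G.V) : ℝ :=
  (1 / (G.deg x : ℝ)) *
    ∑' (e : {e : G.E // G.head e = x}) (f : {f : G.E // G.head f = y}),
      G.qn n e.1 f.1

def Adj (x y : G.V) : Prop := ∃ e : G.E, G.tail e = x ∧ G.head e = y

def Connected : Prop := ∀ x y : G.V, Relation.ReflTransGen G.Adj x y

/-- There is a walk of length `n` from `x` to `y`. -/
def WalkLen (G : Multigraph) : ℕ → G.V → G.V → Prop
  | 0, x, y => x = y
  | n + 1, x, y => ∃ z, G.Adj x z ∧ WalkLen G n z y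

/-- Graph distance. -/
noncomputable def dist (x y : G.V) : ℕ := sInf {n | G.WalkLen n x y}

/-- A cycle: a nonempty list of distinct oriented edges, with distinct initial
vertices, such that consecutive edges (cyclically) form non-backtracking steps. -/
def IsCycle (l : List G.E) : Prop :=
  l ≠ [] ∧ l.Nodup ∧ (l.map G.tail).Nodup ∧ List.Chain' G.Step (l ++ l.take 1)

/-- Small cycles are dense: some radius `R` works for every ball. -/
def SmallCyclesDense : Prop :=
  ∃ R : ℕ, ∀ x : G.V, ∃ l : List G.E, G.IsCycle l ∧ ∀ e ∈ l, G.dist x (G.tail e) ≤ R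

/-- `X` is a (finite) cycle graph. -/
def IsCycleGraph : Prop := (Set.univ : Set G.V).Finite ∧ ∀ x, G.deg x = 2

def Bipartite : Prop := ∃ c : G.V → Bool, ∀ e : G.E, c (G.tail e) ≠ c (G.head e)

end Multigraph

section Aux

open scoped Classical

namespace Multigraph

variable {G : Multigraph}

lemma tail_bar (e : G.E) : G.tail (G.bar e) = G.head e := by
  rw [← G.head_bar, G.bar_bar]

lemma bar_injective : Function.Injective G.bar := by
  intro a b h
  rw [← G.bar_bar a, h, G.bar_bar]

lemma step_bar {e f : G.E} (h : G.Step e f) : G.Step (G.bar f) (G.bar e) := by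
  refine ⟨?_, ?_⟩
  · rw [tail_bar, G.head_bar, h.1]
  · rw [G.bar_bar]
    intro hb
    exact h.2 (by rw [← hb])

lemma reach_bar {e f : G.E} (h : G.Reach e f) : G.Reach (G.bar f) (G.bar e) := by
  induction h with
  | refl => exact Relation.ReflTransGen.refl
  | tail _ hstep ih => exact Relation.ReflTransGen.head (step_bar hstep) ih

lemma mem_out {x : G.V} {e : G.E} : e ∈ (G.locFin x).toFinset ↔ G.tail e = x := by
  simp [Set.Finite.mem_toFinset]

lemma deg_ge_two_of_step {e f : G.E} (h : G.Step e f) : 2 ≤ G.deg (G.head e) := by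
  have hf : f ∈ (G.locFin (G.head e)).toFinset := mem_out.2 h.1
  have hb : G.bar e ∈ (G.locFin (G.head e)).toFinset := mem_out.2 (tail_bar e)
  have hsub : ({f, G.bar e} : Finset G.E) ⊆ (G.locFin (G.head e)).toFinset := by
    intro x hx
    rcases Finset.mem_insert.1 hx with rfl | hx
    · exact hf
    · rcases Finset.mem_singleton.1 hx with rfl
      exact hb
  calc 2 = ({f, G.bar e} : Finset G.E).card := (Finset.card_pair h.2).symm
    _ ≤ _ := Finset.card_le_card hsub

/-- The key combinatorial lemma: a nonempty, forward-closed, strongly connected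
set of edges must contain some edge together with its reversal. -/
lemma sink_meets_bar [Fintype G.V] [Fintype G.E]
    (hconn : G.Connected) (hdeg : ∀ x, 2 ≤ G.deg x) (hnc : ¬ G.IsCycleGraph)
    (C : Finset G.E) (hne : C.Nonempty)
    (hfwd : ∀ f ∈ C, ∀ g, G.Step f g → g ∈ C) :
    ∃ f ∈ C, G.bar f ∈ C := by
  by_contra hbar
  push_neg at hbar
  -- heads are injective on C
  have hinj : ∀ f ∈ C, ∀ f' ∈ C, G.head f = G.head f' → f = f' := by
    intro f hf f' hf' hh
    by_contra hne'
    have hstep : G.Step f' (G.bar f) := by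
      refine ⟨by rw [tail_bar, hh], ?_⟩
      intro h
      exact hne' (bar_injective h)
    exact hbar f hf (hfwd f' hf' _ hstep)
  -- out-degrees within C
  have hout : ∀ f ∈ C, (C.filter (fun g => G.Step f g)).card = G.deg (G.head f) - 1 := by
    intro f hf
    have : C.filter (fun g => G.Step f g)
        = ((G.locFin (G.head f)).toFinset).erase (G.bar f) := by
      ext g
      simp only [Finset.mem_filter, Finset.mem_erase, mem_out]
      constructor
      · rintro ⟨-, hs⟩; exact ⟨hs.2, hs.1⟩
      · rintro ⟨h1, h2⟩
        exact ⟨hfwd f hf g ⟨h2, h1⟩, h2, h1⟩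
    rw [this, Finset.card_erase_of_mem (mem_out.2 (tail_bar f))]
    rfl
  -- in-degrees within C are at most 1
  have hin : ∀ g : G.E, (C.filter (fun f => G.Step f g)).card ≤ 1 := by
    intro g
    apply Finset.card_le_one.2
    intro a ha b hb
    simp only [Finset.mem_filter] at ha hb
    exact hinj a ha.1 b hb.1 (by rw [← ha.2.1, ← hb.2.1])
  -- double counting
  have hsum : ∑ f ∈ C, (C.filter (fun g => G.Step f g)).card
      = ∑ g ∈ C, (C.filter (fun f => G.Step f g)).card := by
    simp only [Finset.card_filter]
    exact Finset.sum_comm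
  have houtge : ∀ f ∈ C, 1 ≤ (C.filter (fun g => G.Step f g)).card := by
    intro f hf
    rw [hout f hf]
    have := hdeg (G.head f)
    omega
  have hlow : C.card ≤ ∑ f ∈ C, (C.filter (fun g => G.Step f g)).card := by
    calc C.card = ∑ _f ∈ C, 1 := by simp
      _ ≤ _ := Finset.sum_le_sum houtge
  have hhigh : ∑ g ∈ C, (C.filter (fun f => G.Step f g)).card ≤ C.card := by
    calc ∑ g ∈ C, (C.filter (fun f => G.Step f g)).card
        ≤ ∑ _g ∈ C, 1 := Finset.sum_le_sum (fun g _ => hin g)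
      _ = C.card := by simp
  have houteq : ∑ f ∈ C, (C.filter (fun g => G.Step f g)).card = C.card := by omega
  have hineq : ∑ g ∈ C, (C.filter (fun f => G.Step f g)).card = C.card := by omega
  -- every vertex used has degree 2
  have hdeg2 : ∀ f ∈ C, G.deg (G.head f) = 2 := by
    have h1 : ∀ f ∈ C, (C.filter (fun g => G.Step f g)).card = 1 := by
      have := (Finset.sum_eq_sum_iff_of_le (fun f hf => houtge f hf)).1
        (by rw [houteq]; simp)
      intro f hf
      exact ((this f hf).symm)
    intro f hf
    have h2 := h1 f hf
    rw [hout f hf] at h2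
    have := hdeg (G.head f)
    omega
  -- every edge in C has a predecessor in C
  have hpred : ∀ g ∈ C, ∃ f ∈ C, G.Step f g := by
    have h1 : ∀ g ∈ C, (C.filter (fun f => G.Step f g)).card = 1 := by
      have := (Finset.sum_eq_sum_iff_of_le (fun g (_ : g ∈ C) => hin g)).1
        (by rw [hineq]; simp)
      intro g hg
      exact this g hg
    intro g hg
    have : (C.filter (fun f => G.Step f g)).Nonempty := by
      rw [← Finset.card_pos, h1 g hg]; norm_num
    obtain ⟨f, hf⟩ := this
    simp only [Finset.mem_filter] at hf
    exact ⟨f, hf.1, hf.2⟩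
  -- the set of heads is closed under adjacency
  set VC : Finset G.V := C.image G.head with hVC
  have hclosed : ∀ y ∈ VC, ∀ z, G.Adj y z → z ∈ VC := by
    intro y hy z hadj
    obtain ⟨f, hfC, hfy⟩ := Finset.mem_image.1 hy
    obtain ⟨h, hh1, hh2⟩ := hadj
    by_cases hcase : h = G.bar f
    · obtain ⟨p, hpC, hps⟩ := hpred f hfC
      have : z = G.head p := by
        rw [← hh2, hcase, G.head_bar, hps.1]
      rw [this]
      exact Finset.mem_image.2 ⟨p, hpC, rfl⟩
    · have hstep : G.Step f h := ⟨by rw [hh1, hfy], hcase⟩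
      have := hfwd f hfC h hstep
      exact Finset.mem_image.2 ⟨h, this, hh2⟩
  have hall : ∀ y : G.V, y ∈ VC := by
    obtain ⟨f0, hf0⟩ := hne
    have hx0 : G.head f0 ∈ VC := Finset.mem_image.2 ⟨f0, hf0, rfl⟩
    intro y
    have hwalk := hconn (G.head f0) y
    induction hwalk with
    | refl => exact hx0
    | tail _ hadj ih => exact hclosed _ ih _ hadj
  -- so the graph is a cycle graph, contradiction
  apply hnc
  refine ⟨Set.finite_univ, fun x => ?_⟩
  obtain ⟨f, hfC, hfx⟩ := Finset.mem_image.1 (hall x)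
  rw [← hfx]
  exact hdeg2 f hfC

lemma reach_bar_self [Fintype G.V] [Fintype G.E]
    (hconn : G.Connected) (hdeg : ∀ x, 2 ≤ G.deg x) (hnc : ¬ G.IsCycleGraph)
    (e : G.E) : G.Reach e (G.bar e) := by
  set s : Finset G.E := Finset.univ.filter (fun g => G.Reach e g) with hs
  have hes : e ∈ s := by
    simp only [hs, Finset.mem_filter, Finset.mem_univ, true_and]
    exact Relation.ReflTransGen.refl
  obtain ⟨g0, hg0s, hmin⟩ := Finset.exists_min_image s
    (fun g => (Finset.univ.filter (fun h => G.Reach g h)).card) ⟨e, hes⟩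
  have hg0 : G.Reach e g0 := by
    simpa only [hs, Finset.mem_filter, Finset.mem_univ, true_and] using hg0s
  set C : Finset G.E := Finset.univ.filter (fun h => G.Reach g0 h) with hC
  have hmemC : ∀ h, h ∈ C ↔ G.Reach g0 h := by
    intro h
    simp only [hC, Finset.mem_filter, Finset.mem_univ, true_and]
  have hne : C.Nonempty := ⟨g0, (hmemC g0).2 Relation.ReflTransGen.refl⟩
  have hfwd : ∀ f ∈ C, ∀ g, G.Step f g → g ∈ C := by
    intro f hf g hstep
    exact (hmemC g).2 (Relation.ReflTransGen.tail ((hmemC f).1 hf) hstep)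
  have hsc : ∀ f ∈ C, ∀ g ∈ C, G.Reach f g := by
    intro f hf g hg
    have hfC : G.Reach g0 f := (hmemC f).1 hf
    have hfs : f ∈ s := by
      simp only [hs, Finset.mem_filter, Finset.mem_univ, true_and]
      exact hg0.trans hfC
    have hsub : Finset.univ.filter (fun h => G.Reach f h) ⊆ C := by
      intro h hh
      simp only [Finset.mem_filter, Finset.mem_univ, true_and] at hh
      exact (hmemC h).2 (hfC.trans hh)
    have heq : Finset.univ.filter (fun h => G.Reach f h) = C :=
      Finset.eq_of_subset_of_card_le hsub (hmin f hfs)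
    have hg0f : G.Reach f g0 := by
      have : g0 ∈ Finset.univ.filter (fun h => G.Reach f h) := by
        rw [heq]; exact (hmemC g0).2 Relation.ReflTransGen.refl
      simpa only [Finset.mem_filter, Finset.mem_univ, true_and] using this
    exact hg0f.trans ((hmemC g).1 hg)
  obtain ⟨f, hfC, hbfC⟩ := sink_meets_bar hconn hdeg hnc C hne hfwd
  have hef : G.Reach e f := hg0.trans ((hmemC f).1 hfC)
  have hfbf : G.Reach f (G.bar f) := hsc f hfC _ hbfC
  exact (hef.trans hfbf).trans (reach_bar hef)

lemma reach_of_tail_eq_head [Fintype G.V] [Fintype G.E]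
    (hconn : G.Connected) (hdeg : ∀ x, 2 ≤ G.deg x) (hnc : ¬ G.IsCycleGraph)
    {e f : G.E} (h : G.tail f = G.head e) : G.Reach e f := by
  by_cases hc : f = G.bar e
  · rw [hc]; exact reach_bar_self hconn hdeg hnc e
  · exact Relation.ReflTransGen.single ⟨h, hc⟩

lemma reach_total [Fintype G.V] [Fintype G.E]
    (hconn : G.Connected) (hdeg : ∀ x, 2 ≤ G.deg x) (hnc : ¬ G.IsCycleGraph)
    (e f : G.E) : G.Reach e f := by
  have key : ∀ x : G.V, Relation.ReflTransGen G.Adj x (G.tail f) →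
      ∀ e' : G.E, G.head e' = x → G.Reach e' f := by
    intro x hwalk
    induction hwalk using Relation.ReflTransGen.head_induction_on with
    | refl =>
      intro e' he'
      exact reach_of_tail_eq_head hconn hdeg hnc (by rw [he'])
    | head hadj _ ih =>
      intro e' he'
      obtain ⟨h, hh1, hh2⟩ := hadj
      have h1 : G.Reach e' h :=
        reach_of_tail_eq_head hconn hdeg hnc (by rw [hh1, he'])
      exact h1.trans (ih h hh2)
  exact key (G.head e) (hconn _ _) e rfl

lemma q_pos_of_step {e f : G.E} (h : G.Step e f) : 0 < G.q e f := by
  rw [Multigraph.q, if_pos h]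
  have h2 := deg_ge_two_of_step h
  have : (1 : ℝ) ≤ (G.deg (G.head e) : ℝ) - 1 := by
    have : (2 : ℝ) ≤ (G.deg (G.head e) : ℝ) := by exact_mod_cast h2
    linarith
  positivity

lemma q_nonneg (e f : G.E) : 0 ≤ G.q e f := by
  by_cases h : G.Step e f
  · exact (q_pos_of_step h).le
  · rw [Multigraph.q, if_neg h]

lemma qn_nonneg [Fintype G.E] (n : ℕ) (e f : G.E) : 0 ≤ G.qn n e f := by
  induction n generalizing e f with
  | zero =>
    rw [Multigraph.qn]
    split <;> norm_num
  | succ n ih =>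
    rw [Multigraph.qn, tsum_fintype]
    exact Finset.sum_nonneg fun g _ => mul_nonneg (ih e g) (q_nonneg g f)

end Multigraph

end Aux

/-- For a finite connected multigraph with minimum degree 2 that is
not a cycle, the non-backtracking edge walk is irreducible. -/
theorem nbrw_irreducible (G : Multigraph) [Fintype G.V] [Fintype G.E]
    (hconn : G.Connected) (hdeg : ∀ x, 2 ≤ G.deg x) (hnc : ¬ G.IsCycleGraph) :
    ∀ e f : G.E, ∃ n : ℕ, 0 < G.qn n e f := by
  intro e f
  have hreach := Multigraph.reach_total hconn hdeg hnc e f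
  induction hreach with
  | refl =>
    refine ⟨0, ?_⟩
    rw [Multigraph.qn, if_pos rfl]
    norm_num
  | @tail g h _ hstep ih =>
    obtain ⟨n, hn⟩ := ih
    refine ⟨n + 1, ?_⟩
    rw [Multigraph.qn, tsum_fintype]
    apply Finset.sum_pos'
    · intro x _
      exact mul_nonneg (Multigraph.qn_nonneg n e x) (Multigraph.q_nonneg x h)
    · exact ⟨g, Finset.mem_univ g,
        mul_pos hn (Multigraph.q_pos_of_step hstep)⟩
end

section
/- Let X be an infinite locally finite connected multigraph with minimum degree 2. Then for every oriented edge e, the set of oriented edges f reachable from e by a non-backtracking path (e ⇒ f) is infinite. -/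
/-!
If the set of edges reachable from `e` were finite, then, since every edge has a non-backtracking
successor (minimum degree 2), some edge `f` reachable from `e` lies on a closed non-backtracking
walk. Every edge reachable from `f` then has a predecessor reachable from `f`, and this makes the
set of heads of edges reachable from `f` closed under adjacency, hence all of `V` by
connectedness. That set is finite, contradicting `V` infinite.
-/

open scoped BigOperators
open Filter

open Relation (ReflTransGen TransGen)

theorem Relation.exists_transGen_self_of_finite {α : Type*} {r : α → α → Prop}
    (hsucc : ∀ a, ∃ b, r a b) {a : α} (hfin : {b | ReflTransGen r a b}.Finite) :
    ∃ b, ReflTransGen r a b ∧ TransGen r b b := by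
  choose σ hσ using hsucc
  have hiter : ∀ x n, ReflTransGen r x (σ^[n] x) := by
    intro x n
    induction n with
    | zero => exact .refl
    | succ n ih => exact Function.iterate_succ_apply' σ n x ▸ ih.tail (hσ _)
  obtain ⟨m, n, hmn, heq⟩ := Set.Finite.exists_lt_map_eq_of_forall_mem (hiter a) hfin
  obtain ⟨k, rfl⟩ := Nat.exists_eq_add_of_lt hmn
  refine ⟨σ^[m] a, hiter a m, ?_⟩
  have hcycle : σ^[k + 1] (σ^[m] a) = σ^[m] a := by
    rw [← Function.iterate_add_apply, heq]; congr 1; omega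
  have hstep := hσ (σ^[k] (σ^[m] a))
  rw [← Function.iterate_succ_apply' σ k, hcycle] at hstep
  exact TransGen.tail' (hiter _ k) hstep

namespace Multigraph

variable {G : Multigraph}

theorem exists_step {e : G.E} (hdeg : 2 ≤ G.deg (G.head e)) : ∃ f, G.Step e f := by
  obtain ⟨f, hf, hne⟩ := Finset.exists_mem_ne hdeg (G.bar e)
  exact ⟨f, (G.locFin _).mem_toFinset.1 hf, hne⟩

theorem Connected.eq_univ {S : Set G.V} (hconn : G.Connected) {x : G.V} (hx : x ∈ S)
    (hS : ∀ y z, y ∈ S → G.Adj y z → z ∈ S) : S = Set.univ := by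
  refine Set.eq_univ_of_forall fun z => ?_
  induction hconn x z with
  | refl => exact hx
  | tail _ hadj ih => exact hS _ _ ih hadj

theorem head_image_reach_adj_closed {f : G.E} (hf : TransGen G.Step f f) (x y : G.V)
    (hx : x ∈ G.head '' {g | G.Reach f g}) (hxy : G.Adj x y) :
    y ∈ G.head '' {g | G.Reach f g} := by
  obtain ⟨g, hg, rfl⟩ := hx
  obtain ⟨h, hgh, rfl⟩ := hxy
  by_cases hbar : h = G.bar g
  · obtain ⟨g', hg', hstep⟩ := TransGen.tail'_iff.1 (hf.trans_left hg)
    exact ⟨g', hg', by rw [hbar, G.head_bar, hstep.1]⟩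
  · exact ⟨h, ReflTransGen.tail hg ⟨hgh, hbar⟩, rfl⟩

end Multigraph

/-- In an infinite locally finite connected multigraph with minimum
degree 2, from every oriented edge the set of edges reachable by a
non-backtracking walk is infinite. -/
theorem nbrw_reach_infinite (G : Multigraph) [Infinite G.V]
    (hconn : G.Connected) (hdeg : ∀ x, 2 ≤ G.deg x) :
    ∀ e : G.E, {f : G.E | G.Reach e f}.Infinite := by
  intro e hfin
  obtain ⟨f, hef, hff⟩ :=
    Relation.exists_transGen_self_of_finite (fun g => Multigraph.exists_step (hdeg (G.head g))) hfin
  have hU : G.head '' {g | G.Reach f g} = Set.univ :=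
    hconn.eq_univ ⟨f, .refl, rfl⟩ (Multigraph.head_image_reach_adj_closed hff)
  have hsub : G.head '' {g | G.Reach f g} ⊆ G.head '' {g | G.Reach e g} :=
    Set.image_mono fun g hg => ReflTransGen.trans hef hg
  exact Set.infinite_univ (hU ▸ (hfin.image G.head).subset hsub)
end
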